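/- arXiv:0808.1922 — 3 statements merged into one kernel-verified Lean document; each statement's English description precedes it below -/
import Mathlib

section
/- For every ε > 0, the number of 2×2 integer matrices with all entries of absolute value at most k having a repeated eigenvalue is O_ε(k^{2+ε}). -/
/-!
If `(a - d)² + 4bc = 0` then `a - d = 2m` with `m² = -bc`, so `|b| |c|` is a perfect square and
`d` is determined by `a`, `b`, `c` and the sign of `a - d`; with the signs of `b` and `c` this
bounds the count by `8 (2k + 1)` times the number of pairs `x, y ≤ k` with `xy` a square.
Such a pair with `x, y ≥ 1` is `(g u², g v²)` for `g = gcd x y`, so for each `g` there are at most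
`k / g` of them, about `k log k` in total, and `log k ≤ k ^ ε / ε`.
-/

open Finset

theorem Nat.exists_eq_mul_sq_of_isSquare_mul {x y : ℕ} (h : IsSquare (x * y)) :
    ∃ g u v, x = g * u ^ 2 ∧ y = g * v ^ 2 := by
  obtain ⟨n, hn⟩ := h
  obtain ⟨x', y', hx, hy, hcop⟩ := _root_.extract_gcd x y
  set g := GCDMonoid.gcd x y
  rcases eq_or_ne g 0 with hg | hg
  · exact ⟨0, 0, 0, by simp [hx, hg], by simp [hy, hg]⟩
  obtain ⟨m, rfl⟩ : g ∣ n :=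
    (Nat.pow_dvd_pow_iff two_ne_zero).1 ⟨x' * y', by rw [sq, ← hn, hx, hy]; ring⟩
  have hm : x' * y' = m ^ 2 :=
    mul_left_cancel₀ (pow_ne_zero 2 hg) (by rw [hx, hy] at hn; linear_combination hn)
  obtain ⟨u, hu⟩ := exists_eq_pow_of_mul_eq_pow hcop hm
  obtain ⟨v, hv⟩ :=
    exists_eq_pow_of_mul_eq_pow (by rwa [_root_.gcd_comm]) ((mul_comm _ _).trans hm)
  exact ⟨g, u, v, hu ▸ hx, hv ▸ hy⟩

theorem Nat.le_sqrt_div_of_mul_sq_le {g u k : ℕ} (hg : 0 < g) (h : g * u ^ 2 ≤ k) :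
    u ≤ Nat.sqrt (k / g) :=
  Nat.le_sqrt.2 <| (Nat.le_div_iff_mul_le hg).2 <| by linarith

def squareProductPairs (s : Finset ℕ) : Finset (ℕ × ℕ) :=
  {p ∈ s ×ˢ s | IsSquare (p.1 * p.2)}

theorem card_squareProductPairs_Icc_le (k : ℕ) :
    #(squareProductPairs (Icc 1 k)) ≤ ∑ g ∈ Icc 1 k, k / g := by
  let T := (Icc 1 k).sigma fun g => Icc 1 (Nat.sqrt (k / g)) ×ˢ Icc 1 (Nat.sqrt (k / g))
  calc _ ≤ #(T.image fun t => (t.1 * t.2.1 ^ 2, t.1 * t.2.2 ^ 2)) := card_le_card ?_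
    _ ≤ #T := card_image_le
    _ = ∑ g ∈ Icc 1 k, Nat.sqrt (k / g) ^ 2 := by simp [T, sq]
    _ ≤ _ := sum_le_sum fun g _ => Nat.sqrt_le' _
  intro p hp
  simp only [squareProductPairs, mem_filter, mem_product, mem_Icc] at hp
  obtain ⟨⟨⟨hx1, hxk⟩, hy1, hyk⟩, hsq⟩ := hp
  obtain ⟨g, u, v, hx, hy⟩ := Nat.exists_eq_mul_sq_of_isSquare_mul hsq
  have hg : 0 < g := Nat.pos_of_mul_pos_right (hx ▸ hx1 : 0 < g * u ^ 2)
  have hu : 0 < u := Nat.pos_of_ne_zero fun hu => by simp [hu] at hx; omega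
  have hv : 0 < v := Nat.pos_of_ne_zero fun hv => by simp [hv] at hy; omega
  simp only [T, mem_image, mem_sigma, mem_product, mem_Icc]
  exact ⟨⟨g, u, v⟩, ⟨⟨hg, (Nat.le_mul_of_pos_right g (by positivity)).trans (hx ▸ hxk)⟩,
    ⟨hu, Nat.le_sqrt_div_of_mul_sq_le hg (hx ▸ hxk)⟩,
    hv, Nat.le_sqrt_div_of_mul_sq_le hg (hy ▸ hyk)⟩,
    by rw [← hx, ← hy]⟩

theorem card_squareProductPairs_range_le (k : ℕ) :
    #(squareProductPairs (range (k + 1))) ≤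
      2 * (k + 1) + #(squareProductPairs (Icc 1 k)) := by
  calc _ ≤ #(({0} ×ˢ range (k + 1) ∪ range (k + 1) ×ˢ {0}) ∪
        squareProductPairs (Icc 1 k)) := by
        refine card_le_card fun p hp => ?_
        simp only [squareProductPairs, mem_filter, mem_product, mem_range, mem_Icc, mem_union,
          mem_singleton] at hp ⊢
        by_cases h0 : p.1 = 0 ∨ p.2 = 0
        · left; omega
        · right; exact ⟨by omega, hp.2⟩
    _ ≤ _ := by
        grw [card_union_le, card_union_le]
        simp
        omega

theorem sum_div_le_mul_one_add_log (k : ℕ) :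
    ((∑ g ∈ Icc 1 k, k / g : ℕ) : ℝ) ≤ k * (1 + Real.log k) :=
  calc _ ≤ ∑ g ∈ Icc 1 k, (k : ℝ) / g := by
        push_cast; exact sum_le_sum fun g _ => Nat.cast_div_le
    _ = k * harmonic k := by
        rw [harmonic_eq_sum_Icc]; push_cast; rw [mul_sum]; simp only [div_eq_mul_inv]
    _ ≤ _ := mul_le_mul_of_nonneg_left (harmonic_le_one_add_log k) k.cast_nonneg

theorem Int.isSquare_natAbs_mul_of_sq_add_four_mul_eq_zero {a b c d : ℤ}
    (h : (a - d) ^ 2 + 4 * b * c = 0) : IsSquare (b.natAbs * c.natAbs) := by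
  have hsq : Even ((a - d) ^ 2) := ⟨-(2 * b * c), by linarith⟩
  obtain ⟨m, hm⟩ : Even (a - d) := (Int.even_pow.1 hsq).1
  rw [hm] at h
  exact ⟨m.natAbs, by
    rw [← Int.natAbs_mul, ← Int.natAbs_mul, show b * c = -(m * m) by linarith, Int.natAbs_neg]⟩

theorem card_filter_sq_sub_add_four_mul_eq_zero_le (k : ℕ) :
    #{p ∈ Icc (-(k : ℤ)) k ×ˢ Icc (-(k : ℤ)) k ×ˢ Icc (-(k : ℤ)) k ×ˢ Icc (-(k : ℤ)) k |
        (p.1 - p.2.2.2) ^ 2 + 4 * p.2.1 * p.2.2.1 = 0} ≤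
      (2 * k + 1) * #(squareProductPairs (range (k + 1))) * 8 := by
  calc _ ≤ #(Icc (-(k : ℤ)) k ×ˢ squareProductPairs (range (k + 1)) ×ˢ
        (univ : Finset (Bool × Bool × Bool))) :=
        card_le_card_of_injOn (fun p => (p.1, (p.2.1.natAbs, p.2.2.1.natAbs),
          (decide ((0 : ℤ) ≤ p.2.1), decide ((0 : ℤ) ≤ p.2.2.1), decide (p.2.2.2 ≤ p.1)))) ?_ ?_
    _ = _ := by
        rw [card_product, card_product, Int.card_Icc, card_univ]
        rw [show ((k : ℤ) + 1 - -k).toNat = 2 * k + 1 by omega]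
        simp only [Fintype.card_prod, Fintype.card_bool]
        ring
  · rintro ⟨a, b, c, d⟩ hp
    simp only [coe_filter, mem_product, mem_Icc, Set.mem_ofPred_eq] at hp
    simp only [squareProductPairs, coe_product, Set.mem_prod, mem_coe, mem_Icc, mem_filter,
      mem_product, mem_range, coe_univ, Set.mem_univ, and_true]
    exact ⟨hp.1.1, ⟨⟨by omega, by omega⟩, Int.isSquare_natAbs_mul_of_sq_add_four_mul_eq_zero hp.2⟩⟩
  · rintro ⟨a, b, c, d⟩ hp ⟨a', b', c', d'⟩ hq hpq
    simp only [coe_filter, mem_product, Set.mem_ofPred_eq] at hp hq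
    simp only [Prod.mk.injEq, decide_eq_decide] at hpq
    obtain ⟨rfl, ⟨hb, hc⟩, hb', hc', hd⟩ := hpq
    obtain rfl : b = b' := by omega
    obtain rfl : c = c' := by omega
    have : (d - d') * (2 * a - d - d') = 0 := by linear_combination hq.2 - hp.2
    suffices d = d' by rw [this]
    rcases mul_eq_zero.1 this with h | h <;> omega

/-- For every ε > 0, the number of 2×2 integer matrices with entries bounded by
k having a repeated eigenvalue is O_ε(k^{2+ε}). -/
theorem stmt_7 (ε : ℝ) (hε : 0 < ε) :
    ∃ C : ℝ, 0 < C ∧ ∀ k : ℕ, 1 ≤ k →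
      ((Finset.filter
          (fun p : ℤ × ℤ × ℤ × ℤ => (p.1 - p.2.2.2) ^ 2 + 4 * p.2.1 * p.2.2.1 = 0)
          (Icc (-(k : ℤ)) k ×ˢ Icc (-(k : ℤ)) k ×ˢ Icc (-(k : ℤ)) k ×ˢ
            Icc (-(k : ℤ)) k)).card : ℝ)
        ≤ C * (k : ℝ) ^ ((2 : ℝ) + ε) := by
  refine ⟨24 * (5 + 1 / ε), by positivity, fun k hk => ?_⟩
  have hk1 : (1 : ℝ) ≤ k := by exact_mod_cast hk
  have hpow : (1 : ℝ) ≤ (k : ℝ) ^ ε := Real.one_le_rpow hk1 hε.le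
  have hlog : Real.log k ≤ (k : ℝ) ^ ε / ε := Real.log_le_rpow_div k.cast_nonneg hε
  have hcount : _ ≤ (2 * k + 1) * (2 * (k + 1) + ∑ g ∈ Icc 1 k, k / g) * 8 :=
    (card_filter_sq_sub_add_four_mul_eq_zero_le k).trans <| by
      gcongr
      exact (card_squareProductPairs_range_le k).trans (by grw [card_squareProductPairs_Icc_le])
  have hsum := sum_div_le_mul_one_add_log k
  have hfactor : 5 + (k : ℝ) ^ ε / ε ≤ (5 + 1 / ε) * (k : ℝ) ^ ε := by
    rw [add_mul, div_eq_mul_one_div, mul_comm]; gcongr; linarith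
  calc _ ≤ (((2 * k + 1) * (2 * (k + 1) + ∑ g ∈ Icc 1 k, k / g) * 8 : ℕ) : ℝ) := by
        exact_mod_cast hcount
    _ ≤ (3 * k) * (4 * k + k * (1 + (k : ℝ) ^ ε / ε)) * 8 := by
        push_cast at hsum ⊢
        gcongr ?_ * (?_ + ?_) * 8
        · linarith
        · linarith
        · exact hsum.trans (by gcongr)
    _ = 24 * (5 + (k : ℝ) ^ ε / ε) * (k : ℝ) ^ 2 := by ring
    _ ≤ 24 * ((5 + 1 / ε) * (k : ℝ) ^ ε) * (k : ℝ) ^ 2 := by gcongr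
    _ = _ := by rw [Real.rpow_add (by positivity), Real.rpow_two]; ring
end

section
/- The integral of V over [−2,2] equals (4/9)(7√2 + 4 + 3 log(√2 + 1)), where V is the even function defined piecewisely by V(δ) = 4 − 2δ − δ² + δ²log(1+δ) − 2(1−δ)log(1−δ) for 0 ≤ δ < 1, V(δ) = 4 − 2δ − δ² + δ²log(δ+1) + 2(δ−1)log(δ−1) for 1 < δ ≤ √2, V(δ) = δ² − 2δ − (δ²−2δ+2)log(δ−1) for √2 < δ ≤ 2. -/
/-!
On `[0, √2]` the first two branches of `V` are a single closed form, because `Real.log (t - 1)`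
is `log |t - 1|`; its primitive is continuous across the kink at `t = 1`, so the fundamental
theorem of calculus applies off the countable set `{1}`. The last branch has an elementary
primitive on `(1, ∞)`. Evenness doubles `∫₀² V`, and the two primitives evaluate at `√2` through
`(√2)² = 2` and `log (√2 - 1) = -log (√2 + 1)`.
-/

open Real Set MeasureTheory intervalIntegral

/-- The even function V of the paper. -/
noncomputable def V (δ : ℝ) : ℝ :=
  let t := |δ|
  if t < 1 then
    4 - 2 * t - t ^ 2 + t ^ 2 * Real.log (1 + t) - 2 * (1 - t) * Real.log (1 - t)
  else if t = 1 then 1 + Real.log 2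
  else if t ≤ Real.sqrt 2 then
    4 - 2 * t - t ^ 2 + t ^ 2 * Real.log (t + 1) + 2 * (t - 1) * Real.log (t - 1)
  else t ^ 2 - 2 * t - (t ^ 2 - 2 * t + 2) * Real.log (t - 1)

theorem intervalIntegral.integral_neg_self_eq_two_smul_of_even {E : Type*}
    [NormedAddCommGroup E] [NormedSpace ℝ E] {f : ℝ → E} (hf : Function.Even f) {a : ℝ}
    (ha : IntervalIntegrable f volume 0 a) :
    ∫ x in -a..a, f x = 2 • ∫ x in 0..a, f x := by
  have hneg : ∫ x in -a..0, f x = ∫ x in 0..a, f x := by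
    simpa [hf.eq] using (integral_comp_neg (a := 0) (b := a) f).symm
  have hint : IntervalIntegrable f volume (-a) 0 := by
    simpa [hf.eq] using ((IntervalIntegrable.iff_comp_neg).mp ha).symm
  rw [← integral_add_adjacent_intervals hint ha, hneg, two_smul]

theorem Real.log_sqrt_two_sub_one : log (√2 - 1) = -log (√2 + 1) := by
  rw [← log_inv]
  congr 1
  refine eq_inv_of_mul_eq_one_left ?_
  linear_combination sq_sqrt zero_le_two

theorem Real.sqrt_two_le_two : √2 ≤ 2 := sqrt_two_lt_three_halves.le.trans (by norm_num)

noncomputable def innerV (t : ℝ) : ℝ :=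
  4 - 2 * t - t ^ 2 + t ^ 2 * log (1 + t) + 2 * (t - 1) * log (t - 1)

noncomputable def innerVAntideriv (t : ℝ) : ℝ :=
  (t ^ 3 + 1) / 3 * log (1 + t) + (t - 1) ^ 2 * log (t - 1)
    - 4 / 9 * t ^ 3 - 4 / 3 * t ^ 2 + 14 / 3 * t

noncomputable def outerV (t : ℝ) : ℝ :=
  t ^ 2 - 2 * t - (t ^ 2 - 2 * t + 2) * log (t - 1)

noncomputable def outerVAntideriv (t : ℝ) : ℝ :=
  4 / 9 * t ^ 3 - 4 / 3 * t ^ 2 + 4 / 3 * t - (t ^ 3 / 3 - t ^ 2 + 2 * t - 4 / 3) * log (t - 1)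

theorem V_even : Function.Even V := fun x => by simp only [V, abs_neg]

theorem eqOn_V_innerV : EqOn V innerV (Icc 0 √2) := by
  rintro t ⟨ht₀, ht⟩
  simp only [V, innerV, abs_of_nonneg ht₀]
  split_ifs with h₁ h₂
  · rw [← neg_sub 1 t, log_neg_eq_log]
    ring
  · subst h₂
    norm_num
  · rw [add_comm t 1]

theorem eqOn_V_outerV : EqOn V outerV (Ioi √2) := by
  intro t (ht : √2 < t)
  have ht₁ : 1 < t := one_lt_sqrt_two.trans ht
  simp only [V, outerV, abs_of_pos (zero_lt_one.trans ht₁)]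
  rw [if_neg ht₁.not_gt, if_neg ht₁.ne', if_neg ht.not_ge]

theorem continuousOn_innerV : ContinuousOn innerV (Ioi (-1)) := by
  have hmul : Continuous fun t : ℝ => 2 * (t - 1) * log (t - 1) := by
    simp only [mul_assoc]
    fun_prop
  refine ContinuousOn.add ?_ hmul.continuousOn
  fun_prop (disch := (intro x hx; simp only [mem_Ioi] at hx; linarith))

theorem continuousOn_innerVAntideriv : ContinuousOn innerVAntideriv (Ioi (-1)) := by
  have h : ∀ t : ℝ, (t - 1) ^ 2 * log (t - 1) = (t - 1) * ((t - 1) * log (t - 1)) :=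
    fun t => by ring
  unfold innerVAntideriv
  simp only [h]
  fun_prop (disch := (intro x hx; simp only [mem_Ioi] at hx; linarith))

theorem continuousOn_outerV : ContinuousOn outerV (Ioi 1) := by
  unfold outerV
  fun_prop (disch := (intro x hx; simp only [mem_Ioi] at hx; linarith))

theorem hasDerivAt_innerVAntideriv {t : ℝ} (h₀ : 1 + t ≠ 0) (h₁ : t - 1 ≠ 0) :
    HasDerivAt innerVAntideriv (innerV t) t := by
  have hx := hasDerivAt_id t
  have h := (((((hasDerivAt_pow 3 t).add_const 1).div_const 3).mul ((hx.const_add 1).log h₀)).add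
    (((hx.sub_const 1).pow 2).mul ((hx.sub_const 1).log h₁))).sub
    ((hasDerivAt_pow 3 t).const_mul (4 / 9)) |>.sub ((hasDerivAt_pow 2 t).const_mul (4 / 3)) |>.add
    (hx.const_mul (14 / 3))
  refine h.congr_deriv ?_
  simp only [innerV, id, Pi.pow_apply]
  field_simp
  ring

theorem hasDerivAt_outerVAntideriv {t : ℝ} (h₁ : t - 1 ≠ 0) :
    HasDerivAt outerVAntideriv (outerV t) t := by
  have hx := hasDerivAt_id t
  have h := ((((hasDerivAt_pow 3 t).const_mul (4 / 9)).sub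
    ((hasDerivAt_pow 2 t).const_mul (4 / 3))).add (hx.const_mul (4 / 3))).sub
    (((((hasDerivAt_pow 3 t).div_const 3).sub (hasDerivAt_pow 2 t)).add (hx.const_mul 2)
      |>.sub_const (4 / 3)).mul ((hx.sub_const 1).log h₁))
  refine h.congr_deriv ?_
  simp only [outerV, id, Pi.add_apply, Pi.sub_apply]
  field_simp
  ring

theorem intervalIntegrable_innerV : IntervalIntegrable innerV volume 0 √2 :=
  (continuousOn_innerV.mono fun t ht =>
    show -1 < t by linarith [(uIcc_of_le (sqrt_nonneg 2) ▸ ht).1]).intervalIntegrable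

theorem intervalIntegrable_outerV : IntervalIntegrable outerV volume √2 2 :=
  (continuousOn_outerV.mono fun _ ht => one_lt_sqrt_two.trans_le
    (uIcc_of_le sqrt_two_le_two ▸ ht).1).intervalIntegrable

theorem integral_innerV :
    ∫ t in (0 : ℝ)..√2, innerV t = 34 / 9 * √2 - 8 / 3 + (8 * √2 - 8) / 3 * log (√2 + 1) := by
  rw [integral_eq_of_hasDerivAt_off_countable_of_le _ _ (sqrt_nonneg 2) (countable_singleton 1)
    (continuousOn_innerVAntideriv.mono fun t ht => show -1 < t by linarith [ht.1])
    (fun t ht => hasDerivAt_innerVAntideriv (by linarith [ht.1.1]) (sub_ne_zero.2 ht.2))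
    intervalIntegrable_innerV]
  simp only [innerVAntideriv, add_comm 1 √2, log_sqrt_two_sub_one, add_zero, log_one, zero_sub,
    log_neg_eq_log]
  linear_combination ((√2 - 3) / 3 * log (√2 + 1) - 4 / 9 * √2 - 4 / 3) * sq_sqrt zero_le_two

theorem integral_outerV :
    ∫ t in √2..2, outerV t = 32 / 9 - 20 / 9 * √2 - (8 * √2 - 10) / 3 * log (√2 + 1) := by
  rw [integral_eq_sub_of_hasDerivAt (fun t ht => hasDerivAt_outerVAntideriv
    (sub_ne_zero.2 (one_lt_sqrt_two.trans_le (uIcc_of_le sqrt_two_le_two ▸ ht).1).ne'))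
    intervalIntegrable_outerV]
  simp only [outerVAntideriv, log_sqrt_two_sub_one, show (2 : ℝ) - 1 = 1 by norm_num, log_one]
  linear_combination (-(√2 - 3) / 3 * log (√2 + 1) - 4 / 9 * √2 + 4 / 3) * sq_sqrt zero_le_two

/-- ∫_{−2}^{2} V(δ) dδ = (4/9)(7√2 + 4 + 3 log(√2+1)). -/
theorem stmt_16 :
    ∫ δ in (-2 : ℝ)..2, V δ =
      (4 / 9) * (7 * Real.sqrt 2 + 4 + 3 * Real.log (Real.sqrt 2 + 1)) := by
  have hs₀ : (0 : ℝ) ≤ √2 := sqrt_nonneg 2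
  have hinner : EqOn V innerV (uIcc 0 √2) := uIcc_of_le hs₀ ▸ eqOn_V_innerV
  have houter : EqOn V outerV (uIoo √2 2) := fun _ ht =>
    eqOn_V_outerV (uIoo_of_le sqrt_two_le_two ▸ ht).1
  have hV₁ : IntervalIntegrable V volume 0 √2 :=
    intervalIntegrable_innerV.congr (hinner.symm.mono uIoc_subset_uIcc)
  have hV₂ : IntervalIntegrable V volume √2 2 := intervalIntegrable_outerV.congr_uIoo houter.symm
  rw [integral_neg_self_eq_two_smul_of_even V_even (hV₁.trans hV₂),
    ← integral_add_adjacent_intervals hV₁ hV₂, integral_congr hinner, integral_congr_uIoo houter,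
    integral_innerV, integral_outerV]
  ring
end

section
/- Fix integers k ≥ 1, λ with 0 ≤ λ ≤ 2k, and integers 1 ≤ x ≤ y ≤ k. Then the number of pairs (c,d) of nonzero integers with |xc+λ| ≤ k, |yc| ≤ k, |xd| ≤ k, |yd+λ| ≤ k equals k²·C(λ/k;x,y)·D(λ/k;x,y) + O(k/y), where C(δ;x,y) = max(0, min((1−δ)/x + 1/y, 2/y)) and D(δ;x,y) = min((1−δ)/y + 1/x, 2/y), with an absolute implied constant. -/
open Finset

lemma count_helper (k : ℤ) (a b : ℝ) (ha : (-k : ℝ) ≤ a) (hbk : b ≤ (k:ℝ))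
    (P : ℤ → Prop) [DecidablePred P] (hP : ∀ c : ℤ, P c ↔ (a ≤ (c:ℝ) ∧ (c:ℝ) ≤ b)) :
    |((((Icc (-k) k).filter (fun c => c ≠ 0 ∧ P c)).card : ℝ)) - max 0 (b - a)| ≤ 2 := by
  have hset : (Icc (-k) k).filter (fun c => c ≠ 0 ∧ P c) = (Icc ⌈a⌉ ⌊b⌋).erase 0 := by
    ext c
    simp only [mem_filter, mem_erase, mem_Icc, hP, Int.ceil_le, Int.le_floor]
    constructor
    · rintro ⟨_, h0, h⟩; exact ⟨h0, h⟩
    · rintro ⟨h0, h1, h2⟩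
      refine ⟨⟨?_, ?_⟩, h0, h1, h2⟩
      · exact_mod_cast ha.trans h1
      · exact_mod_cast h2.trans hbk
  rw [hset]
  set m : ℕ := (Icc ⌈a⌉ ⌊b⌋).card with hm
  set n : ℕ := ((Icc ⌈a⌉ ⌊b⌋).erase 0).card with hn
  have hnm : n ≤ m := Finset.card_erase_le
  have hmn : m ≤ n + 1 := by
    have := Finset.pred_card_le_card_erase (s := Icc ⌈a⌉ ⌊b⌋) (a := (0:ℤ))
    omega
  have hmr : (m : ℝ) = max ((⌊b⌋ : ℝ) + 1 - ⌈a⌉) 0 := by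
    rw [hm, Int.card_Icc]
    have := Int.toNat_eq_max (⌊b⌋ + 1 - ⌈a⌉)
    have h2 : ((⌊b⌋ + 1 - ⌈a⌉).toNat : ℝ) = ((((⌊b⌋ + 1 - ⌈a⌉).toNat : ℤ)) : ℝ) := by push_cast; ring
    rw [h2, this]
    push_cast
    ring_nf
    try rw [max_comm]
    try push_cast
    try ring_nf
  have hfl : (⌊b⌋ : ℝ) ≤ b := Int.floor_le b
  have hfl2 : b - 1 < (⌊b⌋ : ℝ) := Int.sub_one_lt_floor b
  have hce : a ≤ (⌈a⌉ : ℝ) := Int.le_ceil a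
  have hce2 : (⌈a⌉ : ℝ) < a + 1 := Int.ceil_lt_add_one a
  have h1 : |(m : ℝ) - max 0 (b - a)| ≤ 1 := by
    rw [hmr, max_comm (0:ℝ)]
    calc |max ((⌊b⌋ : ℝ) + 1 - ⌈a⌉) 0 - max (b - a) 0| ≤ |((⌊b⌋ : ℝ) + 1 - ⌈a⌉) - (b - a)| :=
          abs_max_sub_max_le_abs _ _ _
      _ ≤ 1 := by rw [abs_le]; constructor <;> linarith
  have h2 : |(n : ℝ) - (m : ℝ)| ≤ 1 := by
    rw [abs_le]
    have : (n:ℝ) ≤ m := by exact_mod_cast hnm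
    have : (m:ℝ) ≤ n + 1 := by exact_mod_cast hmn
    constructor <;> linarith
  calc |(n : ℝ) - max 0 (b - a)| ≤ |(n:ℝ) - m| + |(m:ℝ) - max 0 (b - a)| := abs_sub_le _ _ _
    _ ≤ 2 := by linarith

set_option maxHeartbeats 1600000 in
/-- The count N_{k,λ}(x,y) of pairs (c,d) of nonzero integers with
|xc+λ|, |yc|, |xd|, |yd+λ| ≤ k equals k²·C(λ/k;x,y)·D(λ/k;x,y) + O(k/y),
where C(δ;x,y) = max(0, min((1−δ)/x + 1/y, 2/y)) and
D(δ;x,y) = min((1−δ)/y + 1/x, 2/y). -/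
theorem stmt_19 :
    ∃ C : ℝ, 0 < C ∧ ∀ k l x y : ℤ, 1 ≤ k → 0 ≤ l → l ≤ 2 * k → 1 ≤ x → x ≤ y →
      y ≤ k →
      |((Finset.filter
            (fun p : ℤ × ℤ => p.1 ≠ 0 ∧ p.2 ≠ 0 ∧ |x * p.1 + l| ≤ k ∧
              |y * p.1| ≤ k ∧ |x * p.2| ≤ k ∧ |y * p.2 + l| ≤ k)
            (Icc (-k) k ×ˢ Icc (-k) k)).card : ℝ) -
          (k : ℝ) ^ 2 *
            (max 0 (min ((1 - (l : ℝ) / k) / x + 1 / y) (2 / y)) *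
              min ((1 - (l : ℝ) / k) / y + 1 / x) (2 / (y : ℝ)))| ≤
        C * (k : ℝ) / (y : ℝ) := by
  refine ⟨12, by norm_num, fun k l x y hk hl hl2 hx hxy hyk => ?_⟩
  have hx0 : (0:ℝ) < (x:ℝ) := by exact_mod_cast hx
  have hy0 : (0:ℝ) < (y:ℝ) := by exact_mod_cast lt_of_lt_of_le hx hxy
  have hk0 : (0:ℝ) < (k:ℝ) := by exact_mod_cast hk
  have hxyr : (x:ℝ) ≤ y := by exact_mod_cast hxy
  have hykr : (y:ℝ) ≤ k := by exact_mod_cast hyk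
  have hlr : (0:ℝ) ≤ l := by exact_mod_cast hl
  have hl2r : (l:ℝ) ≤ 2*k := by exact_mod_cast hl2
  have hx1 : (1:ℝ) ≤ x := by exact_mod_cast hx
  have hy1 : (1:ℝ) ≤ y := by exact_mod_cast le_trans hx hxy
  -- interval endpoints
  set a₁ : ℝ := max ((-(k:ℝ) - l)/x) (-(k:ℝ)/y) with ha₁
  set b₁ : ℝ := min (((k:ℝ) - l)/x) ((k:ℝ)/y) with hb₁
  set a₂ : ℝ := max (-(k:ℝ)/x) ((-(k:ℝ) - l)/y) with ha₂
  set b₂ : ℝ := min ((k:ℝ)/x) (((k:ℝ) - l)/y) with hb₂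
  -- split the filter
  have hsplit : Finset.filter
            (fun p : ℤ × ℤ => p.1 ≠ 0 ∧ p.2 ≠ 0 ∧ |x * p.1 + l| ≤ k ∧
              |y * p.1| ≤ k ∧ |x * p.2| ≤ k ∧ |y * p.2 + l| ≤ k)
            (Icc (-k) k ×ˢ Icc (-k) k)
      = (Icc (-k) k).filter (fun c => c ≠ 0 ∧ (|x * c + l| ≤ k ∧ |y * c| ≤ k)) ×ˢ
        (Icc (-k) k).filter (fun d => d ≠ 0 ∧ (|x * d| ≤ k ∧ |y * d + l| ≤ k)) := by
    rw [← Finset.filter_product]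
    apply Finset.filter_congr
    intro p _
    tauto
  have hP : ∀ c : ℤ, (|x * c + l| ≤ k ∧ |y * c| ≤ k) ↔ (a₁ ≤ (c:ℝ) ∧ (c:ℝ) ≤ b₁) := by
    intro c
    rw [abs_le, abs_le, ha₁, hb₁, max_le_iff, le_min_iff]
    have e1 : ((-(k:ℝ) - l)/x ≤ c) ↔ (-(k:ℝ) ≤ x*c + l) := by
      rw [div_le_iff₀ hx0]; constructor <;> intro h <;> nlinarith
    have e2 : (((k:ℝ) - l)/x ≥ (c:ℝ)) ↔ ((x:ℝ)*c + l ≤ k) := by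
      rw [ge_iff_le, le_div_iff₀ hx0]; constructor <;> intro h <;> nlinarith
    have e3 : ((-(k:ℝ))/y ≤ c) ↔ (-(k:ℝ) ≤ y*c) := by
      rw [div_le_iff₀ hy0]; constructor <;> intro h <;> nlinarith
    have e4 : ((k:ℝ)/y ≥ (c:ℝ)) ↔ ((y:ℝ)*c ≤ k) := by
      rw [ge_iff_le, le_div_iff₀ hy0]; constructor <;> intro h <;> nlinarith
    constructor
    · rintro ⟨⟨h1,h2⟩,h3,h4⟩
      exact ⟨⟨e1.mpr (by exact_mod_cast h1), e3.mpr (by exact_mod_cast h3)⟩,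
        e2.mpr (by exact_mod_cast h2), e4.mpr (by exact_mod_cast h4)⟩
    · rintro ⟨⟨h1,h3⟩,h2,h4⟩
      have h1 := e1.mp h1; have h2 := e2.mp h2; have h3 := e3.mp h3; have h4 := e4.mp h4
      exact ⟨⟨by exact_mod_cast h1, by exact_mod_cast h2⟩, by exact_mod_cast h3, by exact_mod_cast h4⟩
  have hQ : ∀ d : ℤ, (|x * d| ≤ k ∧ |y * d + l| ≤ k) ↔ (a₂ ≤ (d:ℝ) ∧ (d:ℝ) ≤ b₂) := by
    intro d
    rw [abs_le, abs_le, ha₂, hb₂, max_le_iff, le_min_iff]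
    have e1 : ((-(k:ℝ))/x ≤ d) ↔ (-(k:ℝ) ≤ x*d) := by
      rw [div_le_iff₀ hx0]; constructor <;> intro h <;> nlinarith
    have e2 : ((k:ℝ)/x ≥ (d:ℝ)) ↔ ((x:ℝ)*d ≤ k) := by
      rw [ge_iff_le, le_div_iff₀ hx0]; constructor <;> intro h <;> nlinarith
    have e3 : ((-(k:ℝ) - l)/y ≤ d) ↔ (-(k:ℝ) ≤ y*d + l) := by
      rw [div_le_iff₀ hy0]; constructor <;> intro h <;> nlinarith
    have e4 : (((k:ℝ) - l)/y ≥ (d:ℝ)) ↔ ((y:ℝ)*d + l ≤ k) := by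
      rw [ge_iff_le, le_div_iff₀ hy0]; constructor <;> intro h <;> nlinarith
    constructor
    · rintro ⟨⟨h1,h2⟩,h3,h4⟩
      exact ⟨⟨e1.mpr (by exact_mod_cast h1), e3.mpr (by exact_mod_cast h3)⟩,
        e2.mpr (by exact_mod_cast h2), e4.mpr (by exact_mod_cast h4)⟩
    · rintro ⟨⟨h1,h3⟩,h2,h4⟩
      have h1 := e1.mp h1; have h2 := e2.mp h2; have h3 := e3.mp h3; have h4 := e4.mp h4
      exact ⟨⟨by exact_mod_cast h1, by exact_mod_cast h2⟩, by exact_mod_cast h3, by exact_mod_cast h4⟩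
  -- bounds on endpoints
  have ha₁l : (-(k:ℝ)) ≤ a₁ := le_max_of_le_right (by
    rw [le_div_iff₀ hy0]; nlinarith [mul_le_mul_of_nonneg_left hy1 hk0.le, mul_le_mul_of_nonneg_left hx1 hk0.le, mul_le_mul_of_nonneg_left hxyr hk0.le, mul_nonneg hlr hy0.le, mul_nonneg hlr hx0.le, mul_pos hk0 hy0, mul_pos hk0 hx0])
  have hb₁u : b₁ ≤ (k:ℝ) := min_le_of_right_le (by
    rw [div_le_iff₀ hy0]; nlinarith [mul_le_mul_of_nonneg_left hy1 hk0.le, mul_le_mul_of_nonneg_left hx1 hk0.le, mul_le_mul_of_nonneg_left hxyr hk0.le, mul_nonneg hlr hy0.le, mul_nonneg hlr hx0.le, mul_pos hk0 hy0, mul_pos hk0 hx0])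
  have ha₂l : (-(k:ℝ)) ≤ a₂ := le_max_of_le_left (by
    rw [le_div_iff₀ hx0]; nlinarith [mul_le_mul_of_nonneg_left hy1 hk0.le, mul_le_mul_of_nonneg_left hx1 hk0.le, mul_le_mul_of_nonneg_left hxyr hk0.le, mul_nonneg hlr hy0.le, mul_nonneg hlr hx0.le, mul_pos hk0 hy0, mul_pos hk0 hx0])
  have hb₂u : b₂ ≤ (k:ℝ) := min_le_of_left_le (by
    rw [div_le_iff₀ hx0]; nlinarith [mul_le_mul_of_nonneg_left hy1 hk0.le, mul_le_mul_of_nonneg_left hx1 hk0.le, mul_le_mul_of_nonneg_left hxyr hk0.le, mul_nonneg hlr hy0.le, mul_nonneg hlr hx0.le, mul_pos hk0 hy0, mul_pos hk0 hx0])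
  have hc := count_helper k a₁ b₁ ha₁l hb₁u _ hP
  have hd := count_helper k a₂ b₂ ha₂l hb₂u _ hQ
  -- identify the main terms
  set A : ℝ := max 0 (b₁ - a₁) with hA
  set B : ℝ := max 0 (b₂ - a₂) with hB
  have ha₁e : a₁ = -(k:ℝ)/y := by
    rw [ha₁, max_eq_right]
    rw [div_le_div_iff₀ hx0 hy0]; nlinarith [mul_le_mul_of_nonneg_left hy1 hk0.le, mul_le_mul_of_nonneg_left hx1 hk0.le, mul_le_mul_of_nonneg_left hxyr hk0.le, mul_nonneg hlr hy0.le, mul_nonneg hlr hx0.le, mul_pos hk0 hy0, mul_pos hk0 hx0]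
  have hb₂e : b₂ = ((k:ℝ) - l)/y := by
    rw [hb₂, min_eq_right]
    rw [div_le_div_iff₀ hy0 hx0]; nlinarith [mul_le_mul_of_nonneg_left hy1 hk0.le, mul_le_mul_of_nonneg_left hx1 hk0.le, mul_le_mul_of_nonneg_left hxyr hk0.le, mul_nonneg hlr hy0.le, mul_nonneg hlr hx0.le, mul_pos hk0 hy0, mul_pos hk0 hx0]
  have hAe : A = max 0 (min (((k:ℝ) - l)/x + k/y) (2*k/y)) := by
    rw [hA, ha₁e]
    congr 1
    rw [hb₁, show -(k:ℝ)/y = -((k:ℝ)/y) by ring, sub_neg_eq_add, ← min_add_add_right]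
    congr 1
    ring
  have hsub : b₂ - a₂ = min (((k:ℝ)-l)/y + k/x) (2*(k:ℝ)/y) := by
    rcases le_total ((k:ℝ)*y) (((k:ℝ)+l)*x) with h | h
    · have h1 : (-(k:ℝ)-l)/y ≤ -(k:ℝ)/x := by
        rw [div_le_div_iff₀ hy0 hx0]; nlinarith
      have h2 : ((k:ℝ)-l)/y + (k:ℝ)/x ≤ 2*(k:ℝ)/y := by
        have hkx : (k:ℝ)/x ≤ ((k:ℝ)+l)/y := by rw [div_le_div_iff₀ hx0 hy0]; nlinarith
        have : ((k:ℝ)-l)/y + ((k:ℝ)+l)/y = 2*(k:ℝ)/y := by ring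
        linarith
      rw [hb₂e, ha₂, max_eq_left h1, min_eq_left h2]
      ring
    · have h1 : -(k:ℝ)/x ≤ (-(k:ℝ)-l)/y := by
        rw [div_le_div_iff₀ hx0 hy0]; nlinarith
      have h2 : 2*(k:ℝ)/y ≤ ((k:ℝ)-l)/y + (k:ℝ)/x := by
        have hkx : ((k:ℝ)+l)/y ≤ (k:ℝ)/x := by rw [div_le_div_iff₀ hy0 hx0]; nlinarith
        have : ((k:ℝ)-l)/y + ((k:ℝ)+l)/y = 2*(k:ℝ)/y := by ring
        linarith
      rw [hb₂e, ha₂, max_eq_right h1, min_eq_right h2]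
      ring
  have hBnn : (0:ℝ) ≤ b₂ - a₂ := by
    rw [hsub]
    apply le_min
    · have h1 : (-(k:ℝ))/x ≤ ((k:ℝ)-l)/y := by
        rw [div_le_div_iff₀ hx0 hy0]
        nlinarith [mul_le_mul_of_nonneg_left hxyr hk0.le, mul_nonneg hlr hx0.le,
          mul_le_mul_of_nonneg_left hxyr hlr]
      have h2 : (-(k:ℝ))/x = -((k:ℝ)/x) := by ring
      linarith
    · positivity
  have hBe : B = min (((k:ℝ)-l)/y + k/x) (2*(k:ℝ)/y) := by
    rw [hB, max_eq_right hBnn, hsub]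
  -- bounds on A and B
  have hA0 : (0:ℝ) ≤ A := le_max_left _ _
  have hB0 : (0:ℝ) ≤ B := le_max_left _ _
  have hA2 : A ≤ 2*(k:ℝ)/y := by
    rw [hAe]; exact max_le (by positivity) (min_le_right _ _)
  have hB2 : B ≤ 2*(k:ℝ)/y := by
    rw [hBe]; exact min_le_right _ _
  -- main term identification
  have hmain : (k : ℝ) ^ 2 *
      (max 0 (min ((1 - (l : ℝ) / k) / x + 1 / y) (2 / y)) *
        min ((1 - (l : ℝ) / k) / y + 1 / x) (2 / (y : ℝ))) = A * B := by
    have e1 : (1 - (l:ℝ)/k)/x + 1/y = ((((k:ℝ)-l)/x + (k:ℝ)/y))/k := by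
      rw [eq_div_iff hk0.ne']; field_simp
    have e2 : (2:ℝ)/(y:ℝ) = (2*(k:ℝ)/y)/k := by
      field_simp
    have e3 : (1 - (l:ℝ)/k)/y + 1/x = ((((k:ℝ)-l)/y + (k:ℝ)/x))/k := by
      rw [eq_div_iff hk0.ne']; field_simp
    rw [e1, e2, e3, min_div_div_right hk0.le, min_div_div_right hk0.le,
      show (0:ℝ) = 0/(k:ℝ) by simp, max_div_div_right hk0.le, hAe, hBe]
    field_simp
  -- put it together
  have hkyr : (1:ℝ) ≤ (k:ℝ)/y := by rw [le_div_iff₀ hy0]; linarith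
  rw [hsplit, Finset.card_product, hmain]
  push_cast
  set Nc : ℝ := ((filter (fun c => c ≠ 0 ∧ |x * c + l| ≤ k ∧ |y * c| ≤ k) (Icc (-k) k)).card : ℝ)
  set Nd : ℝ := ((filter (fun d => d ≠ 0 ∧ |x * d| ≤ k ∧ |y * d + l| ≤ k) (Icc (-k) k)).card : ℝ)
  have hNc0 : (0:ℝ) ≤ Nc := by positivity
  have hNd0 : (0:ℝ) ≤ Nd := by positivity
  have hc' : |Nc - A| ≤ 2 := hc
  have hd' : |Nd - B| ≤ 2 := hd
  rw [abs_le] at hc' hd' ⊢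
  set t : ℝ := (k:ℝ)/y with ht
  have h12 : (12:ℝ) * (k:ℝ) / y = 12 * t := by rw [ht]; ring
  rw [h12]
  have hA2' : A ≤ 2*t := by
    rw [ht]; have h : 2*((k:ℝ)/y) = 2*(k:ℝ)/y := by ring
    linarith [hA2]
  have hB2' : B ≤ 2*t := by
    rw [ht]; have h : 2*((k:ℝ)/y) = 2*(k:ℝ)/y := by ring
    linarith [hB2]
  constructor
  · nlinarith [mul_le_mul_of_nonneg_left hd'.1 hNc0, mul_le_mul_of_nonneg_right hc'.1 hB0]
  · nlinarith [mul_le_mul_of_nonneg_left hd'.2 hNc0, mul_le_mul_of_nonneg_right hc'.2 hB0]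
end
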